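/- arXiv:2512.16639 — 2 statements merged into one kernel-verified Lean document; each statement's English description precedes it below -/
import Mathlib

section
/- Let a ∈ A and b be a nearest neighbor of a in B under the ℓ1 norm. Suppose L(v_a) is a random variable (the side length of the matching cell of a in a randomly shifted quadtree with L levels of cell sizes U/2^{i}) satisfying Pr[L(v_a) ≥ U/2^{i-1}] ≤ 2^i ||a-b||_1 / U for each level i, and L(v_a) ≤ U/2^{i_0} deterministically where the levels considered are i_0,...,0. Then E[L(v_a)] ≤ 2·L·||a-b||_1 where L is the number of levels. -/
open MeasureTheory ProbabilityTheory

/-! A random variable `X` taking values among finitely many levels `c k ≥ 0` is dominated by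
`∑ₖ c k · 𝟙{X ≥ c k}`, so `E[X] ≤ ∑ₖ c k · Pr[X ≥ c k]`. For the dyadic levels `U / 2 ^ k`,
`k ≤ i₀`, the tail hypothesis bounds each summand by `U / 2 ^ k · 2 ^ (k + 1) · dist / U = 2 dist`. -/

theorem le_sum_indicator_of_mem_levels {α ι : Type*} (s : Finset ι) (c : ι → ℝ)
    (hc : ∀ k ∈ s, 0 ≤ c k) (f : α → ℝ) {a : α} (ha : ∃ j ∈ s, f a = c j) :
    f a ≤ ∑ k ∈ s, {x | c k ≤ f x}.indicator (fun _ => c k) a := by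
  obtain ⟨j, hj, hfa⟩ := ha
  have hterm : {x | c j ≤ f x}.indicator (fun _ => c j) a = f a :=
    (Set.indicator_of_mem (by simp [hfa]) _).trans hfa.symm
  rw [← hterm]
  exact Finset.single_le_sum (f := fun k => {x | c k ≤ f x}.indicator (fun _ => c k) a)
    (fun k hk => Set.indicator_nonneg (fun _ _ => hc k hk) a) hj

theorem integral_le_sum_mul_measureReal_of_mem_levels {Ω ι : Type*} [MeasurableSpace Ω]
    {μ : Measure Ω} [IsFiniteMeasure μ] (s : Finset ι) (c : ι → ℝ) (hc : ∀ k ∈ s, 0 ≤ c k)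
    {f : Ω → ℝ} (hf : Integrable f μ) (hvals : ∀ ω, ∃ j ∈ s, f ω = c j) :
    ∫ ω, f ω ∂μ ≤ ∑ k ∈ s, c k * μ.real {ω | c k ≤ f ω} := by
  have hS : ∀ k, NullMeasurableSet {ω | c k ≤ f ω} μ := fun k =>
    aestronglyMeasurable_const.nullMeasurableSet_le hf.1
  have hint : ∀ k ∈ s, Integrable ({ω | c k ≤ f ω}.indicator fun _ => c k) μ := fun k _ =>
    (integrable_const (c k)).integrableOn.integrable_indicator₀ (hS k)
  calc ∫ ω, f ω ∂μ
      ≤ ∫ ω, ∑ k ∈ s, {ω | c k ≤ f ω}.indicator (fun _ => c k) ω ∂μ :=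
        integral_mono hf (integrable_finsetSum s hint)
          fun ω => le_sum_indicator_of_mem_levels s c hc f (hvals ω)
    _ = ∑ k ∈ s, c k * μ.real {ω | c k ≤ f ω} := by
        rw [integral_finsetSum s hint]
        refine Finset.sum_congr rfl fun k _ => ?_
        rw [integral_indicator₀ (hS k), setIntegral_const, smul_eq_mul, mul_comm]

/-- If the (nonnegative) random variable `Lva` only takes values among the dyadic cell sizes
`U / 2 ^ i` for `i = i₀, …, 0`, and `Pr[Lva ≥ U / 2 ^ (i-1)] ≤ 2 ^ i * dist / U` for each level,
then `E[Lva] ≤ 2 * 𝓛 * dist` where `𝓛 = i₀ + 1` is the number of levels. -/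
theorem stmt_3 {Ω : Type*} [MeasureSpace Ω] [IsProbabilityMeasure (ℙ : Measure Ω)]
    (Lva : Ω → ℝ) (hint : Integrable Lva) (U dist : ℝ) (hU : 0 < U) (hdist : 0 ≤ dist)
    (i₀ : ℕ)
    (hvals : ∀ ω, ∃ i ≤ i₀, Lva ω = U / 2 ^ i)
    (htail : ∀ i : ℕ, 1 ≤ i → i ≤ i₀ + 1 →
      ℙ {ω | U / 2 ^ (i - 1) ≤ Lva ω} ≤ ENNReal.ofReal (2 ^ i * dist / U)) :
    ∫ ω, Lva ω ≤ 2 * (i₀ + 1) * dist := by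
  have hlevel : ∀ k ∈ Finset.range (i₀ + 1),
      U / 2 ^ k * (ℙ : Measure Ω).real {ω | U / 2 ^ k ≤ Lva ω} ≤ 2 * dist := by
    intro k hk
    have hk : k + 1 ≤ i₀ + 1 := Finset.mem_range.1 hk
    have hprob : (ℙ : Measure Ω).real {ω | U / 2 ^ k ≤ Lva ω} ≤ 2 ^ (k + 1) * dist / U :=
      ENNReal.toReal_le_of_le_ofReal (by positivity) (htail (k + 1) (Nat.le_add_left 1 k) hk)
    calc U / 2 ^ k * (ℙ : Measure Ω).real {ω | U / 2 ^ k ≤ Lva ω}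
        ≤ U / 2 ^ k * (2 ^ (k + 1) * dist / U) := by gcongr
      _ = 2 * dist := by field_simp; ring
  calc ∫ ω, Lva ω
      ≤ ∑ k ∈ Finset.range (i₀ + 1), U / 2 ^ k * (ℙ : Measure Ω).real {ω | U / 2 ^ k ≤ Lva ω} :=
        integral_le_sum_mul_measureReal_of_mem_levels _ (fun k => U / 2 ^ k)
          (fun k _ => by positivity) hint
          fun ω => (hvals ω).imp fun i hi => ⟨Finset.mem_range_succ_iff.2 hi.1, hi.2⟩
    _ ≤ ∑ _k ∈ Finset.range (i₀ + 1), 2 * dist := Finset.sum_le_sum hlevel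
    _ = 2 * (i₀ + 1) * dist := by
        simp only [Finset.sum_const, Finset.card_range, nsmul_eq_mul, Nat.cast_add, Nat.cast_one]
        ring
end

section
/- Lower bound on recourse: for every α ≥ 1 and n, there exist point sets A (of size n) and B (of size 2) in R^1 and a single deletion from B such that any function g: A → B with Σ_{a∈A} |a - g(a)| ≤ α · dist_CH(A,B) before the deletion, and any function g': A → B' after the deletion (B' the remaining single point), differ on at least Ω(n) points of A. -/
/-- Recourse lower bound: for every `α ≥ 1` and `n`, there is a set `A` of `n` points on the
line and a two-point set `B = {b₁, b₂}`, such that for any `α`-approximate assignment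
`g : A → B` (i.e. `∑ |a - g a| ≤ α · dist_CH(A, B)`), after deleting `b₁` from `B` any
assignment `g'` into the remaining point `b₂` differs from `g` on at least `n/2` points. -/
theorem stmt_12 (α : ℝ) (hα : 1 ≤ α) (n : ℕ) (hn : 1 ≤ n) :
    ∃ (A : Finset ℝ) (b₁ b₂ : ℝ), A.card = n ∧ b₁ ≠ b₂ ∧
      ∀ g : ℝ → ℝ, (∀ a ∈ A, g a = b₁ ∨ g a = b₂) →
        (∑ a ∈ A, |a - g a|) ≤ α * ∑ a ∈ A, min |a - b₁| |a - b₂| →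
        ∀ g' : ℝ → ℝ, (∀ a ∈ A, g' a = b₂) →
          (n : ℝ) / 2 ≤ ((A.filter fun a => g a ≠ g' a).card : ℝ) := by
  have hn0 : (0:ℝ) < n := by exact_mod_cast hn
  set δ : ℝ := 1 / (2 * n) with hδ
  have hδ0 : 0 < δ := by positivity
  set M : ℝ := 2 * α + 2 with hM
  refine ⟨(Finset.range n).image (fun i : ℕ => (i : ℝ) * δ), 1, M, ?_, ?_, ?_⟩
  · rw [Finset.card_image_of_injective _ (fun i j h => ?_), Finset.card_range]
    exact_mod_cast mul_right_cancel₀ (ne_of_gt hδ0) h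
  · have : (4:ℝ) ≤ M := by rw [hM]; linarith
    intro h; linarith [h ▸ this]
  · intro g hg hcost g' hg'
    set A := (Finset.range n).image (fun i : ℕ => (i : ℝ) * δ) with hA
    -- every a ∈ A satisfies 0 ≤ a ≤ 1/2
    have hbound : ∀ a ∈ A, 0 ≤ a ∧ a ≤ 1/2 := by
      intro a ha
      rw [hA, Finset.mem_image] at ha
      obtain ⟨i, hi, rfl⟩ := ha
      constructor
      · positivity
      · rw [hδ]
        rw [Finset.mem_range] at hi
        have : (i:ℝ) ≤ n := by exact_mod_cast hi.le
        rw [mul_one_div, div_le_div_iff₀ (by positivity) (by norm_num)]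
        linarith
    -- min |a-1| |a-M| = 1 - a ≤ 1
    have hmin : ∀ a ∈ A, min |a - 1| |a - M| ≤ 1 := by
      intro a ha
      obtain ⟨h0, h1⟩ := hbound a ha
      have : |a - 1| = 1 - a := by rw [abs_of_nonpos (by linarith)]; ring
      calc min |a - 1| |a - M| ≤ |a - 1| := min_le_left _ _
        _ ≤ 1 := by rw [this]; linarith
    have hcardA : A.card = n := by
      rw [hA, Finset.card_image_of_injective _ (fun i j h => ?_), Finset.card_range]
      exact_mod_cast mul_right_cancel₀ (ne_of_gt hδ0) h
    have hrhs : α * ∑ a ∈ A, min |a - 1| |a - M| ≤ α * n := by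
      apply mul_le_mul_of_nonneg_left _ (by linarith)
      calc ∑ a ∈ A, min |a - 1| |a - M| ≤ ∑ a ∈ A, 1 := Finset.sum_le_sum hmin
        _ = n := by rw [Finset.sum_const, hcardA]; simp
    set S := A.filter (fun a => g a = M) with hS
    -- each a ∈ S contributes at least 2α
    have hSsum : (S.card : ℝ) * (2 * α) ≤ ∑ a ∈ A, |a - g a| := by
      have : ∑ a ∈ S, |a - g a| ≤ ∑ a ∈ A, |a - g a| :=
        Finset.sum_le_sum_of_subset_of_nonneg (Finset.filter_subset _ _)
          (fun a _ _ => abs_nonneg _)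
      refine le_trans ?_ this
      have step : ∀ a ∈ S, 2 * α ≤ |a - g a| := by
        intro a ha
        rw [hS, Finset.mem_filter] at ha
        obtain ⟨haA, hgM⟩ := ha
        obtain ⟨h0, h1⟩ := hbound a haA
        rw [hgM, abs_of_nonpos (by rw [hM]; linarith), hM]; linarith
      calc (S.card : ℝ) * (2 * α) = ∑ _a ∈ S, 2 * α := by
            rw [Finset.sum_const, nsmul_eq_mul]
        _ ≤ ∑ a ∈ S, |a - g a| := Finset.sum_le_sum step
    have hScard : (S.card : ℝ) ≤ n / 2 := by
      have h2 : (S.card : ℝ) * (2 * α) ≤ α * n := le_trans hSsum (le_trans hcost hrhs)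
      nlinarith [Nat.cast_nonneg (α := ℝ) S.card]
    -- the complement of S within A is contained in the disagreement set
    have hsub : A.filter (fun a => ¬ (g a = M)) ⊆ A.filter (fun a => g a ≠ g' a) := by
      intro a ha
      rw [Finset.mem_filter] at *
      refine ⟨ha.1, ?_⟩
      rw [hg' a ha.1]
      exact ha.2
    have hsplit := Finset.card_filter_add_card_filter_not
      (s := A) (p := fun a => g a = M)
    have : (n : ℝ) / 2 ≤ ((A.filter (fun a => ¬ (g a = M))).card : ℝ) := by
      have := hsplit
      rw [hcardA] at this
      have h3 : ((A.filter (fun a => g a = M)).card : ℝ)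
          + ((A.filter (fun a => ¬ (g a = M))).card : ℝ) = n := by exact_mod_cast this
      rw [hS] at hScard
      linarith
    calc (n:ℝ)/2 ≤ _ := this
      _ ≤ _ := by exact_mod_cast Finset.card_le_card hsub
end
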